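/- arXiv:2506.21058 — 3 statements merged into one kernel-verified Lean document; each statement's English description precedes it below -/
import Mathlib

section
/- For fixed 0 ≤ w < 1 (i.e., |w|² < 1 in the bulk) and fixed integer l ≥ 0, the ratio of the incomplete Gamma function to the Gamma function satisfies lim_{N→∞} N^l · Γ(N − l, N w²) / Γ(N) = 1. -/
open MeasureTheory Filter Set Real Topology
open scoped Nat

/-!
Write `Γ(k + 1, a) = k! - γ(k + 1, a)`. On `(0, a]` and for `λ ≥ 0` we have
`e^{-t} ≤ e^{λa} e^{-(1+λ)t}`, so the lower incomplete Gamma function satisfies the Chernoff bound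
`γ(k + 1, a) ≤ e^{λa} k! / (1 + λ)^{k+1}`. For `a = N w²` and `k = N - l - 1` this is
`k! (1 + λ)^l q^N` with `q = e^{λw²} / (1 + λ)`, and `q < 1` for a suitable `λ > 0` because
`w² < 1`. Since `N^l (N - l - 1)! / (N - 1)! → 1`, the lower part is negligible.
-/

lemma integrableOn_pow_mul_exp_neg_mul (k : ℕ) {r : ℝ} (hr : 0 < r) :
    IntegrableOn (fun t : ℝ => t ^ k * exp (-(r * t))) (Ioi 0) := by
  simpa [Real.rpow_natCast] using
    integrableOn_rpow_mul_exp_neg_mul_rpow (s := k) (p := 1)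
      (by linarith [k.cast_nonneg (α := ℝ)]) one_pos hr

lemma integral_pow_mul_exp_neg_mul_Ioi (k : ℕ) {r : ℝ} (hr : 0 < r) :
    ∫ t in Ioi 0, t ^ k * exp (-(r * t)) = k ! / r ^ (k + 1) := by
  have h := integral_rpow_mul_exp_neg_mul_Ioi (a := k + 1) (by positivity) hr
  rw [Real.Gamma_nat_eq_factorial, ← Nat.cast_succ, Real.rpow_natCast] at h
  simpa [Real.rpow_natCast, div_eq_inv_mul] using h

lemma setIntegral_Ioc_pow_mul_exp_neg_le (k : ℕ) (a : ℝ) {lam : ℝ} (hlam : 0 ≤ lam) :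
    ∫ t in Ioc 0 a, t ^ k * exp (-t) ≤ exp (lam * a) * (k ! / (1 + lam) ^ (k + 1)) := by
  have hint : IntegrableOn (fun t => exp (lam * a) * (t ^ k * exp (-((1 + lam) * t)))) (Ioi 0) :=
    (integrableOn_pow_mul_exp_neg_mul k (by linarith)).const_mul _
  calc ∫ t in Ioc 0 a, t ^ k * exp (-t)
      ≤ ∫ t in Ioc 0 a, exp (lam * a) * (t ^ k * exp (-((1 + lam) * t))) := by
        refine setIntegral_mono_on ((by fun_prop : Continuous _).integrableOn_Ioc)
          (hint.mono_set Ioc_subset_Ioi_self) measurableSet_Ioc fun t ht => ?_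
        have hexp : exp (-t) ≤ exp (lam * a) * exp (-((1 + lam) * t)) := by
          rw [← exp_add]
          exact exp_le_exp.2 (by nlinarith [ht.2])
        calc t ^ k * exp (-t) ≤ t ^ k * (exp (lam * a) * exp (-((1 + lam) * t))) := by
              gcongr; exact pow_nonneg ht.1.le k
          _ = _ := by ring
    _ ≤ ∫ t in Ioi 0, exp (lam * a) * (t ^ k * exp (-((1 + lam) * t))) := by
        refine setIntegral_mono_set hint ?_ Ioc_subset_Ioi_self.eventuallyLE
        filter_upwards [self_mem_ae_restrict measurableSet_Ioi] with t ht
        have : 0 ≤ t := le_of_lt ht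
        positivity
    _ = exp (lam * a) * (k ! / (1 + lam) ^ (k + 1)) := by
        rw [integral_const_mul, integral_pow_mul_exp_neg_mul_Ioi k (by linarith)]

lemma setIntegral_Ioi_pow_mul_exp_neg (k : ℕ) {a : ℝ} (ha : 0 ≤ a) :
    ∫ t in Ioi a, t ^ k * exp (-t) = (k ! : ℝ) - ∫ t in Ioc 0 a, t ^ k * exp (-t) := by
  have hint : IntegrableOn (fun t : ℝ => t ^ k * exp (-t)) (Ioi 0) := by
    simpa using integrableOn_pow_mul_exp_neg_mul k one_pos
  have hsplit := setIntegral_union (Ioc_disjoint_Ioi le_rfl) measurableSet_Ioi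
    (hint.mono_set Ioc_subset_Ioi_self) (hint.mono_set (Ioi_subset_Ioi ha))
  have hfull := integral_pow_mul_exp_neg_mul_Ioi k one_pos
  simp only [one_mul, one_pow, div_one] at hfull
  rw [Ioc_union_Ioi_eq_Ioi ha, hfull] at hsplit
  linarith

lemma setIntegral_Ioc_natCast_mul_pow_mul_exp_neg_le {l N : ℕ} (hN : l < N) (c : ℝ) {lam : ℝ}
    (hlam : 0 ≤ lam) :
    ∫ t in Ioc 0 (N * c), t ^ (N - l - 1) * exp (-t)
      ≤ (N - l - 1)! * ((1 + lam) ^ l * (exp (lam * c) / (1 + lam)) ^ N) := by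
  refine (setIntegral_Ioc_pow_mul_exp_neg_le _ _ hlam).trans_eq ?_
  have hpow : (1 + lam) ^ (N - l - 1 + 1) * (1 + lam) ^ l = (1 + lam) ^ N := by
    rw [← pow_add]; congr 1; omega
  have hexp : exp (lam * (N * c)) = exp (lam * c) ^ N := by
    rw [← exp_nat_mul]; ring_nf
  rw [hexp, div_pow, ← hpow]
  field_simp

lemma pow_mul_factorial_div_factorial_eq_prod {l N : ℕ} (hN : l < N) :
    (N : ℝ) ^ l * (N - l - 1)! / (N - 1)! =
      ∏ i ∈ Finset.range l, (N : ℝ) / (N + ((i : ℝ) - l)) := by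
  obtain ⟨M, rfl⟩ := Nat.exists_eq_add_of_lt hN
  have hfact := Nat.factorial_mul_ascFactorial M l
  rw [Nat.ascFactorial_eq_prod_range] at hfact
  rw [show l + M + 1 - l - 1 = M by omega, show l + M + 1 - 1 = M + l by omega, ← hfact,
    Finset.prod_div_distrib, Finset.prod_const, Finset.card_range]
  push_cast
  have hprod : ∏ i ∈ Finset.range l, ((M : ℝ) + 1 + i) ≠ 0 :=
    Finset.prod_ne_zero_iff.2 fun i _ => by positivity
  have hshift : ∀ i : ℕ, (l + M + 1 : ℝ) + (i - l) = M + 1 + i := fun i => by ring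
  simp only [hshift]
  field_simp

lemma tendsto_pow_mul_factorial_sub_div_factorial (l : ℕ) :
    Tendsto (fun N : ℕ => (N : ℝ) ^ l * (N - l - 1)! / (N - 1)!) atTop (𝓝 1) := by
  have h := tendsto_finsetProd (Finset.range l) fun i _ =>
    tendsto_natCast_div_add_atTop ((i : ℝ) - l)
  rw [Finset.prod_const_one] at h
  exact h.congr' <| (eventually_gt_atTop l).mono fun N hN =>
    (pow_mul_factorial_div_factorial_eq_prod hN).symm

lemma exists_exp_mul_lt_one_add {c : ℝ} (hc : c < 1) : ∃ lam > 0, exp (lam * c) < 1 + lam := by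
  refine ⟨(1 - c) / 2, by linarith, ?_⟩
  -- `e^{λc} ≤ 1 / (1 - λc) < 1 + λ` for `λ = (1 - c) / 2`
  have hlin := add_one_le_exp (-((1 - c) / 2 * c))
  have hprod : 1 < (1 + (1 - c) / 2) * (1 - (1 - c) / 2 * c) := by
    nlinarith [mul_pos (sub_pos.2 hc) (sub_pos.2 hc)]
  have hinv : exp ((1 - c) / 2 * c) * exp (-((1 - c) / 2 * c)) = 1 := by
    rw [← exp_add, add_neg_cancel, exp_zero]
  nlinarith [exp_pos ((1 - c) / 2 * c), exp_pos (-((1 - c) / 2 * c))]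

/-- For fixed `0 ≤ w < 1` and fixed integer `l ≥ 0`,
`lim_{N→∞} N^l · Γ(N − l, N w²) / Γ(N) = 1`, where
`Γ(m, a) = ∫_a^∞ t^(m−1) e^(−t) dt` and `Γ(N) = (N−1)!`. -/
theorem incomplete_gamma_ratio_limit (w : ℝ) (hw0 : 0 ≤ w) (hw1 : w < 1) (l : ℕ) :
    Tendsto (fun N : ℕ =>
        (N : ℝ) ^ l *
          (∫ t in Set.Ioi ((N : ℝ) * w ^ 2), t ^ (N - l - 1) * Real.exp (-t))
          / (Nat.factorial (N - 1) : ℝ))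
      atTop (nhds 1) := by
  obtain ⟨lam, hlam, hrate⟩ := exists_exp_mul_lt_one_add (c := w ^ 2) (by nlinarith)
  set q := exp (lam * w ^ 2) / (1 + lam)
  have hq : q < 1 := (div_lt_one (by linarith)).2 hrate
  have hratio := tendsto_pow_mul_factorial_sub_div_factorial l
  have hgeom : Tendsto (fun N : ℕ => (1 + lam) ^ l * q ^ N) atTop (𝓝 0) := by
    simpa using (tendsto_pow_atTop_nhds_zero_of_lt_one (by positivity) hq).const_mul
      ((1 + lam) ^ l)
  have hlower : Tendsto (fun N : ℕ => (N : ℝ) ^ l *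
      (∫ t in Ioc 0 (N * w ^ 2), t ^ (N - l - 1) * exp (-t)) / (N - 1)!) atTop (𝓝 0) := by
    refine squeeze_zero' (Eventually.of_forall fun N => ?_) ?_ (by simpa using hratio.mul hgeom)
    · have : 0 ≤ ∫ t in Ioc 0 (N * w ^ 2), t ^ (N - l - 1) * exp (-t) :=
        setIntegral_nonneg measurableSet_Ioc fun t ht => by have := ht.1.le; positivity
      positivity
    · filter_upwards [eventually_gt_atTop l] with N hN
      calc _ ≤ (N : ℝ) ^ l * ((N - l - 1)! * ((1 + lam) ^ l * q ^ N)) / (N - 1)! := by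
            gcongr
            exact setIntegral_Ioc_natCast_mul_pow_mul_exp_neg_le hN _ hlam.le
        _ = _ := by ring
  have hdiff := hratio.sub hlower
  rw [sub_zero] at hdiff
  refine hdiff.congr' (Eventually.of_forall fun N => ?_)
  beta_reduce
  rw [setIntegral_Ioi_pow_mul_exp_neg _ (by positivity)]
  ring
end

section
/- The function F(t) = |t − α|² + ln|1 − |t − α|²/|t|²|, defined for complex t with |t| > 1 and fixed complex α with |α| > 1, attains the value 0 at t = α, and F(t) > 0 for all t ≠ α with |t| > 1 in a neighborhood of α (i.e., α is a strict local minimum with F(α) = 0). -/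
/-!
With `r = ‖t - α‖` and `T = ‖t‖`, the bound `log y ≥ 1 - 1/y` gives
`log (1 - r²/T²) ≥ -r²/(T² - r²)`, which exceeds `-r²` as soon as `T² - r² > 1`.
Near `α` the reverse triangle inequality gives `T² - r² ≥ ‖α‖² - 2‖α‖r`, which is `> 1`
once `r < (‖α‖² - 1)/(2‖α‖)`.
-/

open Real

lemma sq_add_log_abs_one_sub_sq_div_sq_pos {r T : ℝ} (hr : 0 < r) (hrT : 1 + r ^ 2 < T ^ 2) :
    0 < r ^ 2 + log |1 - r ^ 2 / T ^ 2| := by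
  have hT : 0 < T ^ 2 := by nlinarith [sq_nonneg r]
  have hgap : 0 < T ^ 2 - r ^ 2 := by linarith
  have hy : 1 - r ^ 2 / T ^ 2 = (T ^ 2 - r ^ 2) / T ^ 2 := by
    rw [sub_div, div_self hT.ne']
  have hlog : -(r ^ 2 / (T ^ 2 - r ^ 2)) ≤ log |1 - r ^ 2 / T ^ 2| := by
    rw [hy, abs_of_pos (div_pos hgap hT)]
    convert one_sub_inv_le_log_of_pos (div_pos hgap hT) using 1
    field_simp
    ring
  have hsmall : r ^ 2 / (T ^ 2 - r ^ 2) < r ^ 2 := by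
    rw [div_lt_iff₀ hgap]
    nlinarith [sq_pos_of_pos hr]
  linarith

lemma one_add_sq_norm_sub_lt_sq_norm {E : Type*} [SeminormedAddCommGroup E] {x y : E}
    (h : 2 * ‖y‖ * ‖x - y‖ < ‖y‖ ^ 2 - 1) : 1 + ‖x - y‖ ^ 2 < ‖x‖ ^ 2 := by
  have htri : ‖y‖ - ‖x - y‖ ≤ ‖x‖ := by
    linarith [norm_sub_norm_le y x, norm_sub_rev y x]
  have hpos : 0 < ‖y‖ - ‖x - y‖ := by nlinarith [norm_nonneg (x - y), norm_nonneg y]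
  nlinarith [mul_le_mul htri htri hpos.le (norm_nonneg x)]

/-- For fixed `α ∈ ℂ` with `|α| > 1`, the large deviation rate function
`F(t) = |t−α|² + ln|1 − |t−α|²/|t|²|` satisfies `F(α) = 0`, and `F(t) > 0` for all
`t ≠ α` with `|t| > 1` in some punctured neighbourhood of `α`. -/
theorem rate_function_strict_local_min (α : ℂ) (hα : 1 < ‖α‖) :
    let F : ℂ → ℝ := fun t =>
      (‖t - α‖) ^ 2 +
        Real.log |1 - (‖t - α‖) ^ 2 / (‖t‖) ^ 2|
    F α = 0 ∧ ∃ ε > 0, ∀ t : ℂ, t ≠ α → 1 < ‖t‖ →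
      ‖t - α‖ < ε → 0 < F t := by
  intro F
  refine ⟨by simp [F], (‖α‖ ^ 2 - 1) / (2 * ‖α‖), by apply div_pos <;> nlinarith, ?_⟩
  intro t ht _ hclose
  have hgap : 2 * ‖α‖ * ‖t - α‖ < ‖α‖ ^ 2 - 1 := by
    rwa [lt_div_iff₀ (by linarith), mul_comm] at hclose
  exact sq_add_log_abs_one_sub_sq_div_sq_pos (norm_pos_iff.mpr (sub_ne_zero.mpr ht))
    (one_add_sq_norm_sub_lt_sq_norm hgap)
end

section
/- Let P be a polynomial over ℂ with a simple root at z₀ (P(z₀) = 0, P'(z₀) ≠ 0). Then for every continuous function φ : ℂ → ℝ supported in a sufficiently small disc D₀ around z₀ containing no other roots of P, the Gaussian-regularized squared delta satisfies lim_{ε→0} 4π ∫_{D₀} (1/(2πε))² e^(−|P(z)|²/ε) |P(z)|² φ(z) dA(z) = φ(z₀)/|P'(z₀)|², which equals lim_{ε→0} ∫_{D₀} (1/(2πε)) e^(−|P(z)|²/(2ε)) φ(z) dA(z). -/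
/-!
Near the simple root, `P` restricts to a biholomorphism `Φ` of a small disc onto an open
neighbourhood of `0`, and the substitution `w = P z` (real Jacobian `‖P' z‖²`) turns both integrals
into `∫ k_ε(‖w‖) ψ(w) dA(w)` with `ψ = (φ / ‖P'‖²) ∘ Φ⁻¹`. Both radial profiles
`δ_ε(ρ) = e^(-ρ²/(2ε)) / (2πε)` and `4π δ_ε(ρ)² ρ²` are nonnegative, have mass `→ 1` on every disc
(they have explicit antiderivatives in `ρ`) and tend to `0` uniformly on `ρ ≥ δ`, so they are
approximate identities and both integrals tend to `ψ 0 = φ z₀ / ‖P' z₀‖²`.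
-/

open MeasureTheory Filter Real Set Metric Topology

theorem ContinuousLinearMap.det_restrictScalars_smulRight_one (c : ℂ) :
    (((1 : ℂ →L[ℂ] ℂ).smulRight c).restrictScalars ℝ).det = ‖c‖ ^ 2 := by
  simp [ContinuousLinearMap.det, LinearMap.det_restrictScalars, Algebra.norm_complex_apply,
    Complex.normSq_eq_norm_sq]

theorem Complex.setIntegral_image_eq_setIntegral_norm_deriv_sq_smul {E : Type*}
    [NormedAddCommGroup E] [NormedSpace ℝ E] {f f' : ℂ → ℂ} {s : Set ℂ} (hs : MeasurableSet s)
    (hf : ∀ z ∈ s, HasDerivWithinAt f (f' z) s z) (hinj : InjOn f s) (g : ℂ → E) :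
    ∫ w in f '' s, g w = ∫ z in s, ‖f' z‖ ^ 2 • g (f z) := by
  have hf' : ∀ z ∈ s, HasFDerivWithinAt f
      (((1 : ℂ →L[ℂ] ℂ).smulRight (f' z)).restrictScalars ℝ) s z :=
    fun z hz => (hf z hz).hasFDerivWithinAt.restrictScalars ℝ
  simp [integral_image_eq_integral_abs_det_fderiv_smul volume hs hf' hinj,
    ContinuousLinearMap.det_restrictScalars_smulRight_one]

theorem tendstoUniformlyOn_zero_of_norm_le {ι α E : Type*} [SeminormedAddCommGroup E]
    {F : ι → α → E} {B : ι → ℝ} {l : Filter ι} {s : Set α} (hB : Tendsto B l (𝓝 0))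
    (hF : ∀ᶠ i in l, ∀ x ∈ s, ‖F i x‖ ≤ B i) : TendstoUniformlyOn F 0 l s := by
  rw [Metric.tendstoUniformlyOn_iff]
  intro η hη
  filter_upwards [hF, hB.eventually_lt_const hη] with i hFi hBi x hx
  simpa [dist_zero_left] using (hFi x hx).trans_lt hBi

theorem Complex.integral_ball_comp_norm (f : ℝ → ℝ) (R : ℝ) :
    ∫ z in ball (0 : ℂ) R, f ‖z‖ = 2 * π * ∫ ρ in Ioo 0 R, ρ * f ρ := by
  rw [← integral_indicator measurableSet_ball]
  have h1 : (ball (0 : ℂ) R).indicator (fun z => f ‖z‖) = fun z => (Iio R).indicator f ‖z‖ := by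
    ext z
    by_cases h : ‖z‖ < R <;> simp [Set.indicator, h]
  have h2 : (fun ρ : ℝ => ρ ^ (Module.finrank ℝ ℂ - 1) • (Iio R).indicator f ρ)
      = (Iio R).indicator (fun ρ => ρ * f ρ) := by
    ext ρ
    by_cases h : ρ ∈ Iio R <;> simp [h, Complex.finrank_real_complex]
  rw [h1, integral_fun_norm_addHaar volume ((Iio R).indicator f), h2,
    setIntegral_indicator measurableSet_Iio, Ioi_inter_Iio]
  simp only [Complex.finrank_real_complex, Measure.real, Complex.volume_ball, ENNReal.ofReal_one,
    one_pow, one_mul, ENNReal.coe_toReal, NNReal.coe_real_pi, smul_eq_mul, nsmul_eq_mul,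
    Nat.cast_ofNat]
  ring

theorem Complex.integral_ball_comp_norm_eq_sub {f F : ℝ → ℝ} {R : ℝ} (hR : 0 ≤ R)
    (hf : Continuous f) (hF : ∀ ρ, HasDerivAt F (2 * π * ρ * f ρ) ρ) :
    ∫ z in ball (0 : ℂ) R, f ‖z‖ = F R - F 0 := by
  rw [Complex.integral_ball_comp_norm, ← integral_Ioc_eq_integral_Ioo,
    ← intervalIntegral.integral_of_le hR, ← intervalIntegral.integral_const_mul,
    intervalIntegral.integral_eq_sub_of_hasDerivAt
      (fun ρ _ => by simpa only [mul_assoc] using hF ρ)]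
  exact (by fun_prop : Continuous fun ρ => 2 * π * (ρ * f ρ)).intervalIntegrable 0 R

theorem tendsto_div_pow_mul_exp_neg_div {c : ℝ} (hc : 0 < c) (n : ℕ) :
    Tendsto (fun ε => (c / ε) ^ n * exp (-(c / ε))) (𝓝[>] 0) (𝓝 0) :=
  (tendsto_pow_mul_exp_neg_atTop_nhds_zero n).comp <|
    tendsto_inv_nhdsGT_zero.const_mul_atTop hc

/-- The radial profiles `k i` make `w ↦ k i ‖w‖` an approximate identity at `0 ∈ ℂ` along `l`. -/
structure IsRadialApproxIdentity {ι : Type*} (k : ι → ℝ → ℝ) (l : Filter ι) : Prop where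
  continuous : ∀ᶠ i in l, Continuous (k i)
  nonneg : ∀ᶠ i in l, ∀ ρ, 0 ≤ k i ρ
  tendsto_integral_ball : ∀ δ > 0, Tendsto (fun i => ∫ w in ball (0 : ℂ) δ, k i ‖w‖) l (𝓝 1)
  tendstoUniformlyOn_Ici : ∀ δ > 0, TendstoUniformlyOn k 0 l (Ici δ)

namespace IsRadialApproxIdentity

variable {ι : Type*} {k : ι → ℝ → ℝ} {l : Filter ι}

theorem tendsto_setIntegral_mul (hk : IsRadialApproxIdentity k l) {s : Set ℂ}
    (hs : MeasurableSet s) (h0 : s ∈ 𝓝 0) {ψ : ℂ → ℝ} (hψ : IntegrableOn ψ s)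
    (hψ0 : ContinuousWithinAt ψ s 0) :
    Tendsto (fun i => ∫ w in s, k i ‖w‖ * ψ w) l (𝓝 (ψ 0)) := by
  obtain ⟨δ, hδ, hδs⟩ := Metric.mem_nhds_iff.1 h0
  refine tendsto_setIntegral_peak_smul_of_integrableOn_of_tendsto hs measurableSet_ball hδs
    (mem_nhdsWithin_of_mem_nhds (ball_mem_nhds _ hδ)) measure_ball_lt_top.ne
    (hk.nonneg.mono fun i hi w _ => hi ‖w‖) (fun u hu h0u => ?_) (hk.tendsto_integral_ball δ hδ)
    (hk.continuous.mono fun i hi => (hi.comp continuous_norm).aestronglyMeasurable.restrict)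
    hψ hψ0
  obtain ⟨δ', hδ', hδ'u⟩ := Metric.isOpen_iff.1 hu 0 h0u
  refine ((hk.tendstoUniformlyOn_Ici δ' hδ').comp norm).mono fun w hw => ?_
  simpa using not_lt.1 fun h => hw.2 (hδ'u (mem_ball_zero_iff.2 h))

theorem tendsto_setIntegral_comp_mul (hk : IsRadialApproxIdentity k l)
    (Φ : OpenPartialHomeomorph ℂ ℂ) {Φ' : ℂ → ℂ} {z₀ : ℂ} {r : ℝ} (hr : 0 < r)
    (hsource : closedBall z₀ r ⊆ Φ.source) (hΦ : ∀ z ∈ ball z₀ r, HasDerivAt Φ (Φ' z) z)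
    (hΦ' : ContinuousOn Φ' (closedBall z₀ r)) (hΦ'0 : ∀ z ∈ closedBall z₀ r, Φ' z ≠ 0)
    (hz₀ : Φ z₀ = 0) {φ : ℂ → ℝ} (hφ : ContinuousOn φ (closedBall z₀ r)) :
    Tendsto (fun i => ∫ z in ball z₀ r, k i ‖Φ z‖ * φ z) l (𝓝 (φ z₀ / ‖Φ' z₀‖ ^ 2)) := by
  set ψ : ℂ → ℝ := fun w => φ (Φ.symm w) / ‖Φ' (Φ.symm w)‖ ^ 2
  have hball : ball z₀ r ⊆ Φ.source := ball_subset_closedBall.trans hsource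
  have hsymm : ∀ z ∈ closedBall z₀ r, Φ.symm (Φ z) = z := fun z hz => Φ.left_inv (hsource hz)
  have hψ : ContinuousOn ψ (Φ '' closedBall z₀ r) := by
    have hmaps : MapsTo Φ.symm (Φ '' closedBall z₀ r) (closedBall z₀ r) := by
      rintro _ ⟨z, hz, rfl⟩
      rwa [hsymm z hz]
    have hcont : ContinuousOn Φ.symm (Φ '' closedBall z₀ r) :=
      Φ.continuousOn_symm.mono (Φ.image_source_eq_target ▸ image_mono hsource)
    refine (hφ.comp hcont hmaps).div ((hΦ'.norm.pow 2).comp hcont hmaps) ?_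
    rintro _ ⟨z, hz, rfl⟩
    simpa [hsymm z hz] using hΦ'0 z hz
  have hopen : IsOpen (Φ '' ball z₀ r) := Φ.isOpen_image_of_subset_source isOpen_ball hball
  have hcompact : IsCompact (Φ '' closedBall z₀ r) :=
    (isCompact_closedBall z₀ r).image_of_continuousOn (Φ.continuousOn.mono hsource)
  have hsub : Φ '' ball z₀ r ⊆ Φ '' closedBall z₀ r := image_mono ball_subset_closedBall
  have hlim := hk.tendsto_setIntegral_mul hopen.measurableSet
    (hopen.mem_nhds ⟨z₀, mem_ball_self hr, hz₀⟩) ((hψ.integrableOn_compact hcompact).mono_set hsub)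
    ((hψ.mono hsub).continuousWithinAt ⟨z₀, mem_ball_self hr, hz₀⟩)
  have hψ0 : ψ 0 = φ z₀ / ‖Φ' z₀‖ ^ 2 := by
    simp only [ψ, ← hz₀, hsymm z₀ (mem_closedBall_self hr.le)]
  refine hψ0 ▸ hlim.congr fun i => ?_
  rw [Complex.setIntegral_image_eq_setIntegral_norm_deriv_sq_smul measurableSet_ball
    (fun z hz => (hΦ z hz).hasDerivWithinAt) (Φ.injOn.mono hball)]
  refine setIntegral_congr_fun measurableSet_ball fun z hz => ?_
  have hne : ‖Φ' z‖ ≠ 0 := norm_ne_zero_iff.2 (hΦ'0 z (ball_subset_closedBall hz))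
  simp only [ψ, smul_eq_mul, hsymm z (ball_subset_closedBall hz)]
  field_simp

end IsRadialApproxIdentity

noncomputable def gaussianDelta (ε ρ : ℝ) : ℝ := 1 / (2 * π * ε) * exp (-ρ ^ 2 / (2 * ε))

noncomputable def squaredGaussianDelta (ε ρ : ℝ) : ℝ := 4 * π * gaussianDelta ε ρ ^ 2 * ρ ^ 2

theorem squaredGaussianDelta_eq (ε ρ : ℝ) :
    squaredGaussianDelta ε ρ = 4 * π * ((1 / (2 * π * ε)) ^ 2 * exp (-ρ ^ 2 / ε) * ρ ^ 2) := by
  rw [squaredGaussianDelta, gaussianDelta, mul_pow, ← exp_nat_mul]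
  ring_nf

@[fun_prop]
theorem continuous_gaussianDelta (ε : ℝ) : Continuous (gaussianDelta ε) := by
  unfold gaussianDelta; fun_prop

theorem gaussianDelta_nonneg {ε : ℝ} (hε : 0 ≤ ε) (ρ : ℝ) : 0 ≤ gaussianDelta ε ρ := by
  unfold gaussianDelta; positivity

theorem gaussianDelta_le_of_le {ε δ ρ : ℝ} (hε : 0 < ε) (hδ : 0 ≤ δ) (hδρ : δ ≤ ρ) :
    gaussianDelta ε ρ ≤ gaussianDelta ε δ := by
  unfold gaussianDelta
  gcongr

theorem gaussianDelta_mul_sq_le {ε : ℝ} (hε : 0 < ε) (ρ : ℝ) :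
    gaussianDelta ε ρ * ρ ^ 2 ≤ 1 / π := by
  have hx := (add_one_le_exp (ρ ^ 2 / (2 * ε))).trans' (le_add_of_nonneg_right zero_le_one)
  calc gaussianDelta ε ρ * ρ ^ 2 = 1 / π * (ρ ^ 2 / (2 * ε) / exp (ρ ^ 2 / (2 * ε))) := by
        rw [gaussianDelta, neg_div, exp_neg]; field_simp
    _ ≤ 1 / π := by
        have := pi_pos
        grw [div_le_one_of_le₀ hx (exp_pos _).le, mul_one]

theorem tendsto_gaussianDelta {δ : ℝ} (hδ : 0 < δ) :
    Tendsto (fun ε => gaussianDelta ε δ) (𝓝[>] 0) (𝓝 0) := by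
  have h := (tendsto_div_pow_mul_exp_neg_div (half_pos (pow_pos hδ 2)) 1).const_mul
    (1 / (π * δ ^ 2))
  rw [mul_zero] at h
  refine h.congr fun ε => ?_
  have := pi_pos
  rw [gaussianDelta, pow_one, ← mul_assoc, show -(δ ^ 2 / 2 / ε) = -δ ^ 2 / (2 * ε) by ring]
  congr 1
  field_simp

theorem integral_ball_gaussianDelta {ε δ : ℝ} (hε : 0 < ε) (hδ : 0 ≤ δ) :
    ∫ w in ball (0 : ℂ) δ, gaussianDelta ε ‖w‖ = 1 - exp (-(δ ^ 2 / 2 / ε)) := by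
  have hF : ∀ ρ, HasDerivAt (fun ρ => -exp (-ρ ^ 2 / (2 * ε)))
      (2 * π * ρ * gaussianDelta ε ρ) ρ := by
    intro ρ
    refine (((hasDerivAt_pow 2 ρ).fun_neg.div_const (2 * ε)).exp).fun_neg.congr_deriv ?_
    have := pi_pos
    rw [gaussianDelta]
    field_simp
    ring
  rw [Complex.integral_ball_comp_norm_eq_sub hδ (continuous_gaussianDelta ε) hF, neg_div, div_div]
  norm_num
  ring

theorem integral_ball_squaredGaussianDelta {ε δ : ℝ} (hε : 0 < ε) (hδ : 0 ≤ δ) :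
    ∫ w in ball (0 : ℂ) δ, squaredGaussianDelta ε ‖w‖
      = 1 - (δ ^ 2 / ε * exp (-(δ ^ 2 / ε)) + exp (-(δ ^ 2 / ε))) := by
  have hF : ∀ ρ, HasDerivAt (fun ρ => -((ρ ^ 2 / ε + 1) * exp (-ρ ^ 2 / ε)))
      (2 * π * ρ * squaredGaussianDelta ε ρ) ρ := by
    intro ρ
    refine ((((hasDerivAt_pow 2 ρ).div_const ε).add_const 1).mul
      ((hasDerivAt_pow 2 ρ).fun_neg.div_const ε).exp).fun_neg.congr_deriv ?_
    have := pi_pos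
    rw [squaredGaussianDelta_eq]
    field_simp
    ring
  rw [Complex.integral_ball_comp_norm_eq_sub hδ (by unfold squaredGaussianDelta; fun_prop) hF,
    neg_div]
  norm_num
  ring

theorem squaredGaussianDelta_le {ε δ ρ : ℝ} (hε : 0 < ε) (hδ : 0 ≤ δ) (hδρ : δ ≤ ρ) :
    squaredGaussianDelta ε ρ ≤ 4 * gaussianDelta ε δ := by
  have := pi_pos
  calc squaredGaussianDelta ε ρ = 4 * π * gaussianDelta ε ρ * (gaussianDelta ε ρ * ρ ^ 2) := by
        rw [squaredGaussianDelta]; ring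
    _ ≤ 4 * π * gaussianDelta ε δ * (1 / π) := by
        have hρ₀ := gaussianDelta_nonneg hε.le ρ
        have hδ₀ := gaussianDelta_nonneg hε.le δ
        gcongr
        · exact gaussianDelta_le_of_le hε hδ hδρ
        · exact gaussianDelta_mul_sq_le hε ρ
    _ = 4 * gaussianDelta ε δ := by field_simp

theorem gaussianDelta_isRadialApproxIdentity : IsRadialApproxIdentity gaussianDelta (𝓝[>] 0) where
  continuous := Eventually.of_forall continuous_gaussianDelta
  nonneg := eventually_mem_nhdsWithin.mono fun _ hε => gaussianDelta_nonneg (le_of_lt hε)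
  tendsto_integral_ball δ hδ := by
    have h := (tendsto_div_pow_mul_exp_neg_div (half_pos (pow_pos hδ 2)) 0).const_sub 1
    rw [sub_zero] at h
    refine h.congr' (eventually_mem_nhdsWithin.mono fun ε hε => ?_)
    simp only [integral_ball_gaussianDelta hε hδ.le, pow_zero, one_mul]
  tendstoUniformlyOn_Ici δ hδ := by
    refine tendstoUniformlyOn_zero_of_norm_le (tendsto_gaussianDelta hδ) ?_
    filter_upwards [self_mem_nhdsWithin] with ε hε ρ hρ
    rw [norm_of_nonneg (gaussianDelta_nonneg (le_of_lt hε) ρ)]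
    exact gaussianDelta_le_of_le hε hδ.le hρ

theorem squaredGaussianDelta_isRadialApproxIdentity :
    IsRadialApproxIdentity squaredGaussianDelta (𝓝[>] 0) where
  continuous := Eventually.of_forall fun ε => by unfold squaredGaussianDelta; fun_prop
  nonneg := Eventually.of_forall fun ε ρ => by unfold squaredGaussianDelta; positivity
  tendsto_integral_ball δ hδ := by
    have hδ2 := pow_pos hδ 2
    have h := ((tendsto_div_pow_mul_exp_neg_div hδ2 1).add
      (tendsto_div_pow_mul_exp_neg_div hδ2 0)).const_sub 1
    rw [add_zero, sub_zero] at h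
    refine h.congr' (eventually_mem_nhdsWithin.mono fun ε hε => ?_)
    simp only [integral_ball_squaredGaussianDelta hε hδ.le, pow_zero, one_mul, pow_one]
  tendstoUniformlyOn_Ici δ hδ := by
    have hB := (tendsto_gaussianDelta hδ).const_mul 4
    rw [mul_zero] at hB
    refine tendstoUniformlyOn_zero_of_norm_le hB ?_
    filter_upwards [self_mem_nhdsWithin] with ε hε ρ hρ
    rw [norm_of_nonneg (by unfold squaredGaussianDelta; positivity)]
    exact squaredGaussianDelta_le hε hδ.le hρ

theorem Polynomial.exists_openPartialHomeomorph_eval {𝕜 : Type*} [NontriviallyNormedField 𝕜]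
    [CompleteSpace 𝕜] (P : Polynomial 𝕜) {z₀ : 𝕜} (h : P.derivative.eval z₀ ≠ 0) :
    ∃ Φ : OpenPartialHomeomorph 𝕜 𝕜, (∀ z, Φ z = P.eval z) ∧ ∃ r₀ > 0,
      closedBall z₀ r₀ ⊆ Φ.source ∧ ∀ z ∈ closedBall z₀ r₀, P.derivative.eval z ≠ 0 := by
  have hΦ := (P.hasStrictDerivAt z₀).hasStrictFDerivAt_equiv h
  have hopen : IsOpen {z | P.derivative.eval z ≠ 0} :=
    isOpen_ne_fun P.derivative.continuous continuous_const
  obtain ⟨r₀, hr₀, hsub⟩ := nhds_basis_closedBall.mem_iff.1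
    (((hΦ.toOpenPartialHomeomorph _).open_source.inter hopen).mem_nhds
      ⟨hΦ.mem_toOpenPartialHomeomorph_source, h⟩)
  exact ⟨hΦ.toOpenPartialHomeomorph _, fun z => rfl, r₀, hr₀, fun z hz => (hsub hz).1,
    fun z hz => (hsub hz).2⟩

/-- Near a simple root `z₀` of a polynomial `P`, the Gaussian-regularized squared delta
satisfies, for every continuous `φ` supported in a sufficiently small disc around `z₀`
containing no other roots of `P`,
`lim_{ε→0⁺} 4π ∫ (1/(2πε))² e^(−|P(z)|²/ε) |P(z)|² φ(z) dA(z) = φ(z₀)/|P'(z₀)|²`,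
which also equals `lim_{ε→0⁺} ∫ (1/(2πε)) e^(−|P(z)|²/(2ε)) φ(z) dA(z)`. -/
theorem squared_delta_simple_root (P : Polynomial ℂ) (z₀ : ℂ)
    (h0 : P.eval z₀ = 0) (h1 : P.derivative.eval z₀ ≠ 0) :
    ∃ r₀ > 0, (∀ z ∈ Metric.closedBall z₀ r₀, P.eval z = 0 → z = z₀) ∧
      ∀ r : ℝ, 0 < r → r ≤ r₀ →
      ∀ φ : ℂ → ℝ, Continuous φ → Function.support φ ⊆ Metric.ball z₀ r →
        Tendsto (fun ε : ℝ =>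
            4 * π * ∫ z in Metric.ball z₀ r,
              (1 / (2 * π * ε)) ^ 2 * Real.exp (-(‖P.eval z‖) ^ 2 / ε)
                * (‖P.eval z‖) ^ 2 * φ z)
          (nhdsWithin 0 (Set.Ioi 0))
          (nhds (φ z₀ / (‖P.derivative.eval z₀‖) ^ 2))
        ∧ Tendsto (fun ε : ℝ =>
            ∫ z in Metric.ball z₀ r,
              (1 / (2 * π * ε)) * Real.exp (-(‖P.eval z‖) ^ 2 / (2 * ε)) * φ z)
          (nhdsWithin 0 (Set.Ioi 0))
          (nhds (φ z₀ / (‖P.derivative.eval z₀‖) ^ 2)) := by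
  obtain ⟨Φ, hΦ, r₀, hr₀, hsource, hP'⟩ := P.exists_openPartialHomeomorph_eval h1
  have hΦz₀ : Φ z₀ = 0 := (hΦ z₀).trans h0
  refine ⟨r₀, hr₀, fun z hz hz0 => Φ.injOn (hsource hz) (hsource (mem_closedBall_self hr₀.le))
    (by rw [hΦ, hΦ, hz0, h0]), fun r hr hrr₀ φ hφ _ => ?_⟩
  have hball : closedBall z₀ r ⊆ closedBall z₀ r₀ := closedBall_subset_closedBall hrr₀
  have key {k : ℝ → ℝ → ℝ} (hk : IsRadialApproxIdentity k (𝓝[>] 0)) :=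
    hk.tendsto_setIntegral_comp_mul Φ hr (hball.trans hsource)
      (fun z _ => funext hΦ ▸ P.hasDerivAt z) P.derivative.continuous.continuousOn
      (fun z hz => hP' z (hball hz)) hΦz₀ hφ.continuousOn
  simp only [hΦ] at key
  refine ⟨(key squaredGaussianDelta_isRadialApproxIdentity).congr fun ε => ?_,
    key gaussianDelta_isRadialApproxIdentity⟩
  rw [← integral_const_mul]
  simp only [squaredGaussianDelta_eq, mul_assoc]
end
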